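/- Let K be a complete r-uniform r-partite hypergraph (r ≥ 3) with a spanning k-coloring, and suppose no single monochromatic component covers the vertex set. Let w_1,...,w_ℓ be vertices from ℓ pairwise different partite classes, and let J be the set of coordinates j ∈ [k] on which the component vectors of all w_1,...,w_ℓ agree. Then |J| ≥ r+1-ℓ. -/
import Mathlib


open Classical

variable {V : Type*}

/-- `e` is an edge of the complete `r`-uniform `r`-partite hypergraph with
partition `part`: it meets every class in exactly one vertex. -/
def IsPartiteEdge {r : ℕ} (part : V → Fin r) (e : Finset V) : Prop :=
  ∀ i : Fin r, (e.filter fun v => part v = i).card = 1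

/-- `e` is an edge of the complete `r`-uniform `(r,ℓ)`-partite hypergraph:
an `r`-set meeting every class in at most `ℓ` vertices. -/
def IsRLEdge {r : ℕ} (part : V → Fin r) (ℓ : ℕ) (e : Finset V) : Prop :=
  e.card = r ∧ ∀ i : Fin r, (e.filter fun v => part v = i).card ≤ ℓ

/-- An edge is friendly if it meets at most one class in exactly `ℓ` vertices. -/
def Friendly {r : ℕ} (part : V → Fin r) (ℓ : ℕ) (e : Finset V) : Prop :=
  (Finset.univ.filter fun i : Fin r => (e.filter fun v => part v = i).card = ℓ).card ≤ 1

/-- `u` and `v` lie in the same monochromatic component of color `c` of the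
hypergraph with edge predicate `E` and edge coloring `χ`. -/
def MonoConn {k : ℕ} (E : Finset V → Prop) (χ : Finset V → Fin k) (c : Fin k)
    (u v : V) : Prop :=
  Relation.ReflTransGen (fun a b => ∃ e : Finset V, E e ∧ χ e = c ∧ a ∈ e ∧ b ∈ e) u v

/-- The coloring `χ` is spanning: every vertex is incident with an edge of every color. -/
def Spanning {k : ℕ} (E : Finset V → Prop) (χ : Finset V → Fin k) : Prop :=
  ∀ v : V, ∀ c : Fin k, ∃ e : Finset V, E e ∧ χ e = c ∧ v ∈ e

/-- The vertex set can be covered by at most `m` monochromatic components. -/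
def CoversBy {k : ℕ} (E : Finset V → Prop) (χ : Finset V → Fin k) (m : ℕ) : Prop :=
  ∃ f : Fin m → Fin k × V, ∀ v : V, ∃ i : Fin m, MonoConn E χ (f i).1 (f i).2 v

/-- Hamming distance of the component vectors of two vertices: the number of
colors `c` for which they lie in different monochromatic components of color `c`. -/
noncomputable def HamDist {k : ℕ} (E : Finset V → Prop) (χ : Finset V → Fin k)
    (v w : V) : ℕ :=
  (Finset.univ.filter fun c : Fin k => ¬ MonoConn E χ c v w).card

lemma monoConn_symm {k : ℕ} {E : Finset V → Prop} {χ : Finset V → Fin k} {c : Fin k}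
    {u v : V} (h : MonoConn E χ c u v) : MonoConn E χ c v u := by
  induction h with
  | refl => exact Relation.ReflTransGen.refl
  | tail _ h2 ih =>
    obtain ⟨e, he, hc, ha, hb⟩ := h2
    exact Relation.ReflTransGen.trans
      (Relation.ReflTransGen.single ⟨e, he, hc, hb, ha⟩) ih

lemma exists_partite_edge {r ℓ : ℕ} (part : V → Fin r)
    (hne : ∀ i : Fin r, ∃ v, part v = i) (w : Fin ℓ → V)
    (hw : Function.Injective fun i => part (w i)) :
    ∃ e : Finset V, IsPartiteEdge part e ∧ ∀ i, w i ∈ e := by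
  classical
  have hf : ∀ i : Fin r, ∃ v : V, part v = i ∧ (∀ j, part (w j) = i → v = w j) := by
    intro i
    by_cases h : ∃ j, part (w j) = i
    · obtain ⟨j, hj⟩ := h
      refine ⟨w j, hj, fun j' hj' => ?_⟩
      have : j = j' := hw (show part (w j) = part (w j') by rw [hj, hj'])
      rw [this]
    · obtain ⟨v, hv⟩ := hne i
      exact ⟨v, hv, fun j hj => absurd ⟨j, hj⟩ h⟩
  choose f hf1 hf2 using hf
  refine ⟨Finset.image f Finset.univ, ?_, ?_⟩
  · intro i
    rw [Finset.card_eq_one]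
    refine ⟨f i, ?_⟩
    ext a
    simp only [Finset.mem_filter, Finset.mem_image, Finset.mem_univ, true_and,
      Finset.mem_singleton]
    constructor
    · rintro ⟨⟨i', rfl⟩, hp⟩
      rw [hf1 i'] at hp; rw [hp]
    · rintro rfl
      exact ⟨⟨i, rfl⟩, hf1 i⟩
  · intro j
    have := hf2 (part (w j)) j rfl
    simp only [Finset.mem_image]
    exact ⟨part (w j), Finset.mem_univ _, this⟩

lemma key_lemma [Fintype V] {r k : ℕ} (hr : 3 ≤ r) (part : V → Fin r)
    (hne : ∀ i : Fin r, ∃ v, part v = i) (χ : Finset V → Fin k)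
    (hs : Spanning (IsPartiteEdge part) χ)
    (hnc : ¬ ∃ (c : Fin k) (w : V), ∀ u : V, MonoConn (IsPartiteEdge part) χ c w u)
    (d : ℕ) :
    ∀ ℓ : ℕ, 1 ≤ ℓ → r ≤ ℓ + d → ∀ w : Fin ℓ → V,
      (Function.Injective fun i => part (w i)) →
      r + 1 - ℓ ≤ (Finset.univ.filter fun c : Fin k =>
        ∀ i j : Fin ℓ, MonoConn (IsPartiteEdge part) χ c (w i) (w j)).card := by
  induction d with
  | zero =>
    intro ℓ hℓ hrℓ w hw
    have h1 : r + 1 - ℓ ≤ 1 := by omega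
    refine h1.trans ?_
    obtain ⟨e, he, hme⟩ := exists_partite_edge part hne w hw
    refine Finset.card_pos.mpr ⟨χ e, Finset.mem_filter.mpr ⟨Finset.mem_univ _, ?_⟩⟩
    exact fun i j => Relation.ReflTransGen.single ⟨e, he, rfl, hme i, hme j⟩
  | succ d ih =>
    intro ℓ hℓ hrℓ w hw
    by_cases hd : r ≤ ℓ + d
    · exact ih ℓ hℓ hd w hw
    have hℓr : ℓ < r := by omega
    by_contra hcon
    push_neg at hcon
    set J := (Finset.univ.filter fun c : Fin k =>
        ∀ i j : Fin ℓ, MonoConn (IsPartiteEdge part) χ c (w i) (w j)) with hJ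
    have hJcard : J.card ≤ r - ℓ := by omega
    have main : ∀ x : V, (∀ i, part (w i) ≠ part x) →
        J.Nonempty ∧ ∀ c ∈ J, MonoConn (IsPartiteEdge part) χ c x (w ⟨0, hℓ⟩) := by
      intro x hx
      set w' : Fin (ℓ + 1) → V := Fin.snoc w x with hw'
      have hw'c : ∀ i : Fin ℓ, w' i.castSucc = w i := fun i => Fin.snoc_castSucc _ _ _
      have hw'l : w' (Fin.last ℓ) = x := Fin.snoc_last _ _
      have hw'inj : Function.Injective fun i => part (w' i) := by
        intro a b hab
        simp only at hab
        rcases Fin.eq_castSucc_or_eq_last a with ⟨a', rfl⟩ | rfl <;>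
          rcases Fin.eq_castSucc_or_eq_last b with ⟨b', rfl⟩ | rfl
        · rw [hw'c, hw'c] at hab
          exact congrArg Fin.castSucc (hw (show part (w a') = part (w b') from hab))
        · rw [hw'c, hw'l] at hab
          exact absurd hab (hx a')
        · rw [hw'c, hw'l] at hab
          exact absurd hab.symm (hx b')
        · rfl
      have hIH := ih (ℓ + 1) (by omega) (by omega) w' hw'inj
      set J' := (Finset.univ.filter fun c : Fin k =>
          ∀ i j : Fin (ℓ + 1), MonoConn (IsPartiteEdge part) χ c (w' i) (w' j)) with hJ'
      have hcard' : r - ℓ ≤ J'.card := by omega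
      have hsub : J' ⊆ J := by
        intro c hc
        simp only [hJ', Finset.mem_filter] at hc
        simp only [hJ, Finset.mem_filter]
        refine ⟨Finset.mem_univ _, fun i j => ?_⟩
        have := hc.2 i.castSucc j.castSucc
        rwa [hw'c, hw'c] at this
      have heq : J' = J := Finset.eq_of_subset_of_card_le hsub (by omega)
      constructor
      · rw [← heq]
        exact Finset.card_pos.mp (by omega)
      · intro c hc
        rw [← heq] at hc
        simp only [hJ', Finset.mem_filter] at hc
        have := hc.2 (Fin.last ℓ) (⟨0, hℓ⟩ : Fin ℓ).castSucc
        rwa [hw'c, hw'l] at this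
    obtain ⟨q, hq⟩ : ∃ q : Fin r, ∀ i, part (w i) ≠ q := by
      by_contra h
      push_neg at h
      have hsurj : Function.Surjective fun i => part (w i) := by
        intro q; obtain ⟨i, hi⟩ := h q; exact ⟨i, hi⟩
      have := Fintype.card_le_of_surjective _ hsurj
      simp only [Fintype.card_fin] at this
      omega
    obtain ⟨x₀, hx₀⟩ := hne q
    have hx₀' : ∀ i, part (w i) ≠ part x₀ := by rw [hx₀]; exact hq
    obtain ⟨⟨c, hc⟩, _⟩ := main x₀ hx₀'
    refine hnc ⟨c, w ⟨0, hℓ⟩, fun u => ?_⟩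
    obtain ⟨e, he, hχe, hue⟩ := hs u c
    obtain ⟨z, hz⟩ := Finset.card_eq_one.mp (he q)
    have hz' : z ∈ e.filter fun x => part x = q := hz ▸ Finset.mem_singleton_self z
    simp only [Finset.mem_filter] at hz'
    have hzw : MonoConn (IsPartiteEdge part) χ c z (w ⟨0, hℓ⟩) :=
      (main z (fun i => by rw [hz'.2]; exact hq i)).2 c hc
    have huz : MonoConn (IsPartiteEdge part) χ c u z :=
      Relation.ReflTransGen.single ⟨e, he, hχe, hue, hz'.1⟩
    exact monoConn_symm (Relation.ReflTransGen.trans huz hzw)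

theorem stmt_6 [Fintype V] {r k ℓ : ℕ} (hr : 3 ≤ r)
    (part : V → Fin r) (hne : ∀ i : Fin r, ∃ v, part v = i)
    (χ : Finset V → Fin k) (hs : Spanning (IsPartiteEdge part) χ)
    (hnc : ¬ ∃ (c : Fin k) (w : V), ∀ u : V, MonoConn (IsPartiteEdge part) χ c w u)
    (w : Fin ℓ → V) (hw : Function.Injective fun i => part (w i)) :
    r + 1 - ℓ ≤ (Finset.univ.filter fun c : Fin k =>
      ∀ i j : Fin ℓ, MonoConn (IsPartiteEdge part) χ c (w i) (w j)).card := by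
  rcases Nat.eq_zero_or_pos ℓ with hℓ0 | hℓ1
  swap
  · exact key_lemma hr part hne χ hs hnc r ℓ hℓ1 (by omega) w hw
  subst hℓ0
  have huniv : (Finset.univ.filter fun c : Fin k =>
      ∀ i j : Fin 0, MonoConn (IsPartiteEdge part) χ c (w i) (w j)) = Finset.univ :=
    Finset.filter_true_of_mem (fun c _ => fun i => i.elim0)
  rw [huniv, Finset.card_univ, Fintype.card_fin]
  by_contra hcon
  push_neg at hcon
  have hk : k ≤ r := by omega
  -- the pairwise bound from key_lemma at ℓ = 2
  have pairB : ∀ u v : V, part u ≠ part v →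
      r - 1 ≤ (Finset.univ.filter fun c : Fin k =>
        ∀ i j : Fin 2, MonoConn (IsPartiteEdge part) χ c (![u, v] i) (![u, v] j)).card := by
    intro u v huv
    have hinj : Function.Injective fun i : Fin 2 => part (![u, v] i) := by
      intro a b hab
      fin_cases a <;> fin_cases b <;> simp_all
    have := key_lemma hr part hne χ hs hnc r 2 (by norm_num) (by omega) ![u, v] hinj
    omega
  -- star: if u, v cross-class disagree in color c, they agree in every other color
  have star : ∀ u v : V, part u ≠ part v → ∀ c : Fin k,
      ¬ MonoConn (IsPartiteEdge part) χ c u v → ∀ d : Fin k, d ≠ c →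
      MonoConn (IsPartiteEdge part) χ d u v := by
    intro u v huv c hcuv d hdc
    set A := (Finset.univ.filter fun c : Fin k =>
        ∀ i j : Fin 2, MonoConn (IsPartiteEdge part) χ c (![u, v] i) (![u, v] j)) with hA
    have hAb : r - 1 ≤ A.card := pairB u v huv
    have hcA : c ∉ A := by
      intro hcmem
      simp only [hA, Finset.mem_filter] at hcmem
      exact hcuv (by simpa using hcmem.2 0 1)
    have hsub : A ⊆ Finset.univ.erase c := fun a ha =>
      Finset.mem_erase.mpr ⟨fun h => hcA (h ▸ ha), Finset.mem_univ _⟩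
    have hcard : (Finset.univ.erase c).card = k - 1 := by
      rw [Finset.card_erase_of_mem (Finset.mem_univ c), Finset.card_univ, Fintype.card_fin]
    have hAeq : A = Finset.univ.erase c :=
      Finset.eq_of_subset_of_card_le hsub (by omega)
    have hdA : d ∈ A := hAeq ▸ Finset.mem_erase.mpr ⟨hdc, Finset.mem_univ _⟩
    simp only [hA, Finset.mem_filter] at hdA
    simpa using hdA.2 0 1
  have compMeets : ∀ (v : V) (c : Fin k) (q : Fin r),
      ∃ z, part z = q ∧ MonoConn (IsPartiteEdge part) χ c v z := by
    intro v c q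
    obtain ⟨e, he, hχe, hve⟩ := hs v c
    obtain ⟨z, hz⟩ := Finset.card_eq_one.mp (he q)
    have hz' : z ∈ e.filter fun x => part x = q := hz ▸ Finset.mem_singleton_self z
    simp only [Finset.mem_filter] at hz'
    exact ⟨z, hz'.2, Relation.ReflTransGen.single ⟨e, he, hχe, hve, hz'.1⟩⟩
  have avoid2 : ∀ a b : Fin r, ∃ q : Fin r, q ≠ a ∧ q ≠ b := by
    intro a b
    by_contra h
    push_neg at h
    have hsub : (Finset.univ : Finset (Fin r)) ⊆ {a, b} := by
      intro q _
      rcases Classical.em (q = a) with h1 | h1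
      · simp [h1]
      · simp [h q h1]
    have h1 := Finset.card_le_card hsub
    have h2 : ({a, b} : Finset (Fin r)).card ≤ 2 :=
      (Finset.card_insert_le _ _).trans (by simp)
    simp only [Finset.card_univ, Fintype.card_fin] at h1
    omega
  by_cases hall : ∀ (c : Fin k) (u v : V), part u ≠ part v →
      MonoConn (IsPartiteEdge part) χ c u v
  · obtain ⟨t0, ht0⟩ := hne ⟨0, by omega⟩
    obtain ⟨t1, ht1⟩ := hne ⟨1, by omega⟩
    have h01 : part t0 ≠ part t1 := by
      rw [ht0, ht1]; intro h; exact absurd (congrArg Fin.val h) (by simp)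
    obtain ⟨k0⟩ : Nonempty (Fin k) := ⟨χ ∅⟩
    refine hnc ⟨k0, t0, fun u => ?_⟩
    by_cases hu : part t0 = part u
    · have h1 : MonoConn (IsPartiteEdge part) χ k0 t0 t1 := hall k0 t0 t1 h01
      have h2 : MonoConn (IsPartiteEdge part) χ k0 t1 u :=
        hall k0 t1 u (fun h => h01 (hu.trans h.symm))
      exact Relation.ReflTransGen.trans h1 h2
    · exact hall k0 t0 u hu
  · push_neg at hall
    obtain ⟨c, u₀, v₀, hpar, hcuv⟩ := hall
    have hk2 : 2 ≤ k := by
      have hb := pairB u₀ v₀ hpar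
      have hle : (Finset.univ.filter fun c : Fin k =>
          ∀ i j : Fin 2, MonoConn (IsPartiteEdge part) χ c (![u₀, v₀] i)
            (![u₀, v₀] j)).card ≤ k := by
        refine le_trans (Finset.card_filter_le _ _) ?_
        simp [Finset.card_univ]
      omega
    obtain ⟨d, hdc⟩ : ∃ d : Fin k, d ≠ c := by
      refine Fintype.exists_ne_of_one_lt_card ?_ c
      simp only [Fintype.card_fin]; omega
    have claim1 : ∀ x, MonoConn (IsPartiteEdge part) χ c u₀ x →
        MonoConn (IsPartiteEdge part) χ d u₀ x := by
      intro x hx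
      obtain ⟨q, hq1, hq2⟩ := avoid2 (part x) (part u₀)
      obtain ⟨v', hv'q, hv'conn⟩ := compMeets v₀ c q
      have h1 : ¬ MonoConn (IsPartiteEdge part) χ c x v' := fun h =>
        hcuv (Relation.ReflTransGen.trans (Relation.ReflTransGen.trans hx h)
          (monoConn_symm hv'conn))
      have h2 : ¬ MonoConn (IsPartiteEdge part) χ c u₀ v' := fun h =>
        hcuv (Relation.ReflTransGen.trans h (monoConn_symm hv'conn))
      have hα : MonoConn (IsPartiteEdge part) χ d x v' :=
        star x v' (by rw [hv'q]; exact fun h => hq1 h.symm) c h1 d hdc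
      have hβ : MonoConn (IsPartiteEdge part) χ d u₀ v' :=
        star u₀ v' (by rw [hv'q]; exact fun h => hq2 h.symm) c h2 d hdc
      exact Relation.ReflTransGen.trans hβ (monoConn_symm hα)
    have claim2 : ∀ x, MonoConn (IsPartiteEdge part) χ d u₀ x := by
      intro x
      by_cases hcx : MonoConn (IsPartiteEdge part) χ c u₀ x
      · exact claim1 x hcx
      by_cases hpx : part u₀ = part x
      · obtain ⟨q, hq1, hq2⟩ := avoid2 (part x) (part u₀)
        obtain ⟨z, hzq, hzconn⟩ := compMeets u₀ c q
        have h1 : ¬ MonoConn (IsPartiteEdge part) χ c x z := fun h =>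
          hcx (Relation.ReflTransGen.trans hzconn (monoConn_symm h))
        have hα : MonoConn (IsPartiteEdge part) χ d x z :=
          star x z (by rw [hzq]; exact fun h => hq1 h.symm) c h1 d hdc
        have hβ : MonoConn (IsPartiteEdge part) χ d u₀ z := claim1 z hzconn
        exact Relation.ReflTransGen.trans hβ (monoConn_symm hα)
      · exact star u₀ x hpx c hcx d hdc
    exact hnc ⟨d, u₀, claim2⟩
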